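/- arXiv:2407.19026 — 3 statements merged into one kernel-verified Lean document; each statement's English description precedes it below -/
import Mathlib

section
/- Let X and Y be disjoint finite sets of vertices of a complete graph whose edges are each colored red or blue, and let 0 < p < 1. Define f_p(X,Y) = e_R(X,Y) - p|X||Y|, where e_R(X,Y) is the number of red edges with one end in X and the other in Y. Then the sum over v in X of f_p(X, N_R(v) ∩ Y) is at least p|X| · f_p(X,Y), where N_R(v) denotes the set of vertices joined to v by a red edge. -/
open Finset

/-- Number of red edges between `X` and `Y`. -/
def eR {V : Type*} [DecidableEq V] (red : SimpleGraph V) [DecidableRel red.Adj]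
    (X Y : Finset V) : ℕ :=
  ((X ×ˢ Y).filter fun e => red.Adj e.1 e.2).card

/-- Red neighborhood of `v`. -/
def NR {V : Type*} [Fintype V] (red : SimpleGraph V) [DecidableRel red.Adj] (v : V) :
    Finset V :=
  Finset.univ.filter fun u => red.Adj v u

/-- `f_p(X,Y) = e_R(X,Y) - p|X||Y|`. -/
noncomputable def fp {V : Type*} [DecidableEq V] (red : SimpleGraph V) [DecidableRel red.Adj]
    (p : ℝ) (X Y : Finset V) : ℝ :=
  (eR red X Y : ℝ) - p * X.card * Y.card

/-! Writing `d y = |N_R(y) ∩ X|`, double counting gives `∑_{v ∈ X} e_R(X, N_R(v) ∩ Y) = ∑_{y ∈ Y} d y²`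
and `∑_{v ∈ X} |N_R(v) ∩ Y| = ∑_{y ∈ Y} d y = e_R(X,Y)`. The claimed inequality then becomes
`∑_{y ∈ Y} (d y - p|X|)² ≥ 0`. -/

lemma Finset.two_mul_mul_sum_le_sum_sq_add {ι R : Type*} [CommRing R] [LinearOrder R]
    [IsStrictOrderedRing R] (s : Finset ι) (d : ι → R) (c : R) :
    2 * c * ∑ i ∈ s, d i ≤ ∑ i ∈ s, d i ^ 2 + #s * c ^ 2 := by
  rw [mul_sum, ← nsmul_eq_mul, ← sum_const, ← sum_add_distrib]
  exact sum_le_sum fun i _ => (two_mul_le_add_sq c (d i)).trans_eq (add_comm _ _)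

section RedGraph

variable {V : Type*} [Fintype V] (red : SimpleGraph V) [DecidableRel red.Adj]

lemma mem_NR {v u : V} : u ∈ NR red v ↔ red.Adj v u := by
  simp [NR]

variable [DecidableEq V]

lemma eR_eq_sum_card_NR_inter (X Z : Finset V) :
    eR red X Z = ∑ y ∈ Z, #(NR red y ∩ X) := by
  rw [eR, card_filter, sum_product_right]
  refine sum_congr rfl fun y _ => ?_
  rw [← card_filter]
  congr 1
  ext x
  simp [mem_NR, red.adj_comm, and_comm]

lemma sum_sum_NR_inter {M : Type*} [AddCommMonoid M] (X Y : Finset V) (g : V → M) :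
    ∑ v ∈ X, ∑ y ∈ NR red v ∩ Y, g y = ∑ y ∈ Y, #(NR red y ∩ X) • g y := by
  rw [sum_comm' (t' := Y) (s' := fun y => NR red y ∩ X)]
  · simp only [sum_const]
  · intro v y
    simp only [mem_inter, mem_NR, red.adj_comm]
    tauto

lemma sum_card_NR_inter (X Y : Finset V) :
    ∑ v ∈ X, #(NR red v ∩ Y) = eR red X Y := by
  have := sum_sum_NR_inter red X Y (fun _ => 1)
  simp only [sum_const, smul_eq_mul, mul_one] at this
  rw [this, eR_eq_sum_card_NR_inter]

lemma sum_eR_NR_inter (X Y : Finset V) :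
    ∑ v ∈ X, eR red X (NR red v ∩ Y) = ∑ y ∈ Y, #(NR red y ∩ X) ^ 2 := by
  simp only [eR_eq_sum_card_NR_inter, sum_sum_NR_inter, smul_eq_mul, sq]

end RedGraph

theorem stmt0_general {V : Type*} [Fintype V] [DecidableEq V]
    (red : SimpleGraph V) [DecidableRel red.Adj]
    (X Y : Finset V) (p : ℝ) :
    ∑ v ∈ X, fp red p X (NR red v ∩ Y) ≥ p * X.card * fp red p X Y := by
  have heR : (eR red X Y : ℝ) = ∑ y ∈ Y, (#(NR red y ∩ X) : ℝ) := by
    exact_mod_cast eR_eq_sum_card_NR_inter red X Y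
  have hsq : ∑ v ∈ X, (eR red X (NR red v ∩ Y) : ℝ) = ∑ y ∈ Y, (#(NR red y ∩ X) : ℝ) ^ 2 := by
    exact_mod_cast sum_eR_NR_inter red X Y
  have hlin : ∑ v ∈ X, (#(NR red v ∩ Y) : ℝ) = eR red X Y := by
    exact_mod_cast sum_card_NR_inter red X Y
  have hfp : ∑ v ∈ X, fp red p X (NR red v ∩ Y) =
      ∑ y ∈ Y, (#(NR red y ∩ X) : ℝ) ^ 2 - p * #X * eR red X Y := by
    simp only [fp, sum_sub_distrib, ← mul_sum, hsq, hlin]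
  rw [ge_iff_le, hfp, fp, heR]
  linarith [Y.two_mul_mul_sum_le_sum_sq_add (fun y => (#(NR red y ∩ X) : ℝ)) (p * #X)]

theorem stmt0 {V : Type*} [Fintype V] [DecidableEq V]
    (red : SimpleGraph V) [DecidableRel red.Adj]
    (X Y : Finset V) (hXY : Disjoint X Y) (p : ℝ) (hp0 : 0 < p) (hp1 : p < 1) :
    ∑ v ∈ X, fp red p X (NR red v ∩ Y) ≥ p * X.card * fp red p X Y :=
  stmt0_general red X Y p
end

section
/- For all real x with 0 < x < 1 and all positive integers k and ℓ, the two-color Ramsey number satisfies R(k,ℓ) ≤ x^{-(k-1)} · (1-x)^{-(ℓ-1)}. -/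
/-!
Erdős–Szekeres: splitting the remaining vertices by adjacency to a fixed vertex `v` gives
`R(a+1, b+1) ≤ C(a+b, a)` via Pascal's rule. The binomial theorem for `(x + (1 - x))^(a+b) = 1`
shows that each of its terms, in particular `C(a+b, a) x^a (1-x)^b`, is at most `1`.
-/

open Finset SimpleGraph Real

/-- The two-color Ramsey number: the least `N` such that every red-blue coloring of the
edges of the complete graph on `N` vertices contains a red `K_k` or a blue `K_ℓ`. -/
noncomputable def ramsey (k l : ℕ) : ℕ :=
  sInf {N | ∀ red : SimpleGraph (Fin N),
    (∃ s : Finset (Fin N), red.IsNClique k s) ∨ (∃ s : Finset (Fin N), redᶜ.IsNClique l s)}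

namespace SimpleGraph

lemma exists_isNClique_one_subset {V : Type*} (G : SimpleGraph V) {s : Finset V}
    (hs : s.Nonempty) :
    ∃ t ⊆ s, G.IsNClique 1 t :=
  let ⟨v, hv⟩ := hs
  ⟨{v}, singleton_subset_iff.2 hv, isNClique_one.2 ⟨v, rfl⟩⟩

variable {V : Type*} [DecidableEq V]

lemma exists_isNClique_succ_of_subset_filter_adj {G : SimpleGraph V} [DecidableRel G.Adj]
    {s t : Finset V} {v : V} {n : ℕ} (hv : v ∈ s) (ht : t ⊆ (s.erase v).filter (G.Adj v))
    (hG : G.IsNClique n t) : ∃ u ⊆ s, G.IsNClique (n + 1) u :=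
  ⟨insert v t, insert_subset hv (ht.trans ((filter_subset _ _).trans (erase_subset _ _))),
    hG.insert fun _ hw => (mem_filter.1 (ht hw)).2⟩

lemma card_filter_adj_add_card_filter_compl_adj (G : SimpleGraph V) [DecidableRel G.Adj]
    {s : Finset V} {v : V} (hv : v ∈ s) :
    #((s.erase v).filter (G.Adj v)) + #((s.erase v).filter (Gᶜ.Adj v)) + 1 = #s := by
  have hcompl : (s.erase v).filter (Gᶜ.Adj v) = (s.erase v).filter (fun w => ¬ G.Adj v w) :=
    filter_congr fun w hw => by simp [compl_adj, (ne_of_mem_erase hw).symm]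
  rw [hcompl, card_filter_add_card_filter_not, card_erase_add_one hv]

theorem exists_isNClique_or_compl_of_choose_le (G : SimpleGraph V) [DecidableRel G.Adj]
    (a b : ℕ) (s : Finset V) (hs : (a + b).choose a ≤ #s) :
    (∃ t ⊆ s, G.IsNClique (a + 1) t) ∨ ∃ t ⊆ s, Gᶜ.IsNClique (b + 1) t := by
  induction a generalizing b s with
  | zero => exact .inl (G.exists_isNClique_one_subset (card_pos.1 (by simpa using hs)))
  | succ a iha =>
    induction b generalizing s with
    | zero => exact .inr (Gᶜ.exists_isNClique_one_subset (card_pos.1 (by simpa using hs)))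
    | succ b ihb =>
      obtain ⟨v, hv⟩ := card_pos.1 ((Nat.choose_pos (by omega)).trans_le hs)
      set A := (s.erase v).filter (G.Adj v)
      set B := (s.erase v).filter (Gᶜ.Adj v)
      have hsplit : #A + #B + 1 = #s := G.card_filter_adj_add_card_filter_compl_adj hv
      have hpascal : (a + 1 + (b + 1)).choose (a + 1)
          = (a + (b + 1)).choose a + (a + 1 + b).choose (a + 1) := by
        rw [show a + 1 + (b + 1) = a + (b + 1) + 1 by omega, Nat.choose_succ_succ,
          show a + (b + 1) = a + 1 + b by omega]
      have hsub {C : Finset V} (hC : C ⊆ s.erase v) : C ⊆ s := hC.trans (erase_subset _ _)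
      by_cases hA : (a + (b + 1)).choose a ≤ #A
      · rcases iha (b + 1) A hA with ⟨t, ht, hG⟩ | ⟨t, ht, hGc⟩
        · exact .inl (exists_isNClique_succ_of_subset_filter_adj hv ht hG)
        · exact .inr ⟨t, hsub (ht.trans (filter_subset _ _)), hGc⟩
      · rcases ihb B (by omega) with ⟨t, ht, hG⟩ | ⟨t, ht, hGc⟩
        · exact .inl ⟨t, hsub (ht.trans (filter_subset _ _)), hG⟩
        · exact .inr (exists_isNClique_succ_of_subset_filter_adj hv ht hGc)

end SimpleGraph

theorem ramsey_succ_succ_le_choose (a b : ℕ) : ramsey (a + 1) (b + 1) ≤ (a + b).choose a := by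
  refine Nat.sInf_le fun red => ?_
  classical
  exact (red.exists_isNClique_or_compl_of_choose_le a b univ (by simp)).imp
    (fun ⟨t, _, ht⟩ => ⟨t, ht⟩) (fun ⟨t, _, ht⟩ => ⟨t, ht⟩)

theorem choose_mul_pow_mul_pow_le_one {R : Type*} [CommSemiring R] [PartialOrder R]
    [IsOrderedRing R] {x y : R} (hx : 0 ≤ x) (hy : 0 ≤ y) (hxy : x + y = 1) (a b : ℕ) :
    (a + b).choose a * (x ^ a * y ^ b) ≤ 1 := by
  calc ((a + b).choose a : R) * (x ^ a * y ^ b)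
      = x ^ a * y ^ (a + b - a) * (a + b).choose a := by rw [Nat.add_sub_cancel_left]; ring
    _ ≤ ∑ i ∈ range (a + b + 1), x ^ i * y ^ (a + b - i) * (a + b).choose i :=
        single_le_sum (f := fun i => x ^ i * y ^ (a + b - i) * ((a + b).choose i : R))
          (fun _ _ => by positivity) (mem_range.2 (by omega))
    _ = 1 := by rw [← add_pow, hxy, one_pow]

theorem stmt2 (x : ℝ) (hx0 : 0 < x) (hx1 : x < 1) (k l : ℕ) (hk : 0 < k) (hl : 0 < l) :
    (ramsey k l : ℝ) ≤ x ^ (-((k : ℝ) - 1)) * (1 - x) ^ (-((l : ℝ) - 1)) := by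
  obtain ⟨a, rfl⟩ : ∃ a, k = a + 1 := ⟨k - 1, by omega⟩
  obtain ⟨b, rfl⟩ : ∃ b, l = b + 1 := ⟨l - 1, by omega⟩
  have hy : 0 < 1 - x := by linarith
  have hprod : 0 < x ^ a * (1 - x) ^ b := by positivity
  calc (ramsey (a + 1) (b + 1) : ℝ)
      ≤ (a + b).choose a := by exact_mod_cast ramsey_succ_succ_le_choose a b
    _ ≤ (x ^ a * (1 - x) ^ b)⁻¹ := by
        rw [← one_div, le_div_iff₀ hprod]
        exact choose_mul_pow_mul_pow_le_one hx0.le hy.le (by ring) a b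
    _ = x ^ (-(((a + 1 : ℕ) : ℝ) - 1)) * (1 - x) ^ (-(((b + 1 : ℕ) : ℝ) - 1)) := by
        push_cast
        simp only [add_sub_cancel_right, rpow_neg hx0.le, rpow_neg hy.le, rpow_natCast, mul_inv]
end

section
/- Let 0 < μ < 1 and let b, k, m be positive integers with m ≥ 5μ^{-1}b². Let X be a set of vertices of a complete graph with red/blue colored edges such that |X| ≥ 5m², and suppose there exist at least R(k,m) vertices v ∈ X with |N_B(v) ∩ X| ≥ μ|X|. Then X contains a red K_k, or X contains a 'blue book' (S,T): disjoint subsets S, T of X with |S| ≥ b and |T| ≥ (μ^b/2)|X| such that every edge with both ends in S, or one end in S and one in T, is blue. -/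
open Finset SimpleGraph Real

lemma my_clique_pull {N : ℕ} {V : Type*} [DecidableEq V] (G : SimpleGraph V) (f : Fin N ↪ V)
    {n : ℕ} {s : Finset (Fin N)} (h : (SimpleGraph.comap f G).IsNClique n s) :
    G.IsNClique n (s.map f) := by
  constructor
  · intro x hx y hy hxy
    simp only [Finset.coe_map, Set.mem_image, Finset.mem_coe] at hx hy
    obtain ⟨i, hi, rfl⟩ := hx; obtain ⟨j, hj, rfl⟩ := hy
    exact h.1 hi hj fun hij => hxy (by rw [hij])
  · rw [Finset.card_map]; exact h.2

lemma my_comap_compl {N : ℕ} {V : Type*} (G : SimpleGraph V) (f : Fin N ↪ V) :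
    (SimpleGraph.comap (f : Fin N → V) G)ᶜ = SimpleGraph.comap (f : Fin N → V) Gᶜ := by
  ext i j
  simp [compl_adj, f.injective.ne_iff]

/-- Transfer the Ramsey property along an embedding. -/
lemma my_transfer {N k l : ℕ} {V : Type*} [DecidableEq V] (red : SimpleGraph V) (f : Fin N ↪ V)
    (hN : ∀ G : SimpleGraph (Fin N),
      (∃ s : Finset (Fin N), G.IsNClique k s) ∨ (∃ s : Finset (Fin N), Gᶜ.IsNClique l s)) :
    (∃ s : Finset V, (∀ x ∈ s, ∃ i, f i = x) ∧ red.IsNClique k s) ∨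
    (∃ s : Finset V, (∀ x ∈ s, ∃ i, f i = x) ∧ redᶜ.IsNClique l s) := by
  rcases hN (SimpleGraph.comap f red) with ⟨s, hs⟩ | ⟨s, hs⟩
  · refine Or.inl ⟨s.map f, ?_, my_clique_pull red f hs⟩
    intro x hx; obtain ⟨i, _, rfl⟩ := Finset.mem_map.mp hx; exact ⟨i, rfl⟩
  · rw [my_comap_compl] at hs
    refine Or.inr ⟨s.map f, ?_, my_clique_pull redᶜ f hs⟩
    intro x hx; obtain ⟨i, _, rfl⟩ := Finset.mem_map.mp hx; exact ⟨i, rfl⟩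

/-- An embedding of `Fin n` into a finset of size at least `n`. -/
lemma my_emb {V : Type*} [DecidableEq V] (A : Finset V) {n : ℕ} (h : n ≤ A.card) :
    ∃ f : Fin n ↪ V, ∀ i, f i ∈ A := by
  refine ⟨(Fin.castLEEmb h).trans (A.equivFin.symm.toEmbedding.trans
    (Function.Embedding.subtype _)), fun i => ?_⟩
  simp [Function.Embedding.trans]

lemma my_ramsey_exists : ∀ n k l : ℕ, k + l ≤ n → ∃ N : ℕ, ∀ red : SimpleGraph (Fin N),
    (∃ s : Finset (Fin N), red.IsNClique k s) ∨ (∃ s : Finset (Fin N), redᶜ.IsNClique l s) := by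
  intro n
  induction n with
  | zero =>
    intro k l h
    obtain ⟨rfl, rfl⟩ : k = 0 ∧ l = 0 := by omega
    exact ⟨0, fun red => Or.inl ⟨∅, by simp⟩⟩
  | succ n ih =>
    intro k l hkl
    match k, l with
    | 0, l => exact ⟨0, fun red => Or.inl ⟨∅, by simp⟩⟩
    | k + 1, 0 => exact ⟨0, fun red => Or.inr ⟨∅, by simp⟩⟩
    | k + 1, l + 1 =>
      obtain ⟨N₁, h₁⟩ := ih k (l + 1) (by omega)
      obtain ⟨N₂, h₂⟩ := ih (k + 1) l (by omega)
      refine ⟨N₁ + N₂ + 1, fun red => ?_⟩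
      classical
      set v : Fin (N₁ + N₂ + 1) := ⟨N₁ + N₂, by omega⟩ with hv
      set A : Finset (Fin (N₁ + N₂ + 1)) := Finset.univ.filter (fun u => red.Adj v u) with hA
      set B : Finset (Fin (N₁ + N₂ + 1)) :=
        Finset.univ.filter (fun u => u ≠ v ∧ ¬ red.Adj v u) with hB
      have hcard : N₁ ≤ A.card ∨ N₂ ≤ B.card := by
        by_contra hc
        push_neg at hc
        have hdisj : Disjoint A B := by
          rw [Finset.disjoint_left]
          intro a ha hb
          simp only [hA, hB, Finset.mem_filter] at ha hb
          exact hb.2.2 ha.2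
        have hins : insert v (A ∪ B) = Finset.univ := by
          ext u
          simp only [hA, hB, Finset.mem_insert, Finset.mem_union, Finset.mem_filter,
            Finset.mem_univ, true_and, iff_true]
          by_cases h1 : u = v
          · exact Or.inl h1
          · by_cases h2 : red.Adj v u
            · exact Or.inr (Or.inl h2)
            · exact Or.inr (Or.inr ⟨h1, h2⟩)
        have hvnot : v ∉ A ∪ B := by
          simp [hA, hB, Finset.mem_union]
        have h3 : (A ∪ B).card + 1 = N₁ + N₂ + 1 := by
          rw [← Finset.card_insert_of_notMem hvnot, hins, Finset.card_univ, Fintype.card_fin]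
        rw [Finset.card_union_of_disjoint hdisj] at h3
        omega
      rcases hcard with hcard | hcard
      · -- many red neighbors
        obtain ⟨f, hf⟩ := my_emb A hcard
        rcases my_transfer red f h₁ with ⟨s, hsub, hs⟩ | ⟨s, hsub, hs⟩
        · refine Or.inl ⟨insert v s, hs.insert fun u hu => ?_⟩
          obtain ⟨i, rfl⟩ := hsub u hu
          have := hf i
          rw [hA, Finset.mem_filter] at this
          exact this.2
        · exact Or.inr ⟨s, hs⟩
      · -- many non-neighbors
        obtain ⟨f, hf⟩ := my_emb B hcard
        rcases my_transfer red f h₂ with ⟨s, hsub, hs⟩ | ⟨s, hsub, hs⟩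
        · exact Or.inl ⟨s, hs⟩
        · refine Or.inr ⟨insert v s, hs.insert fun u hu => ?_⟩
          obtain ⟨i, rfl⟩ := hsub u hu
          have := hf i
          rw [hB, Finset.mem_filter] at this
          exact ⟨Ne.symm this.2.1, this.2.2⟩

set_option maxHeartbeats 1000000 in
theorem stmt7 {V : Type*} [Fintype V] [DecidableEq V]
    (red : SimpleGraph V) [DecidableRel red.Adj]
    (μ : ℝ) (hμ0 : 0 < μ) (hμ1 : μ < 1)
    (b k m : ℕ) (hb : 0 < b) (hk : 0 < k) (hm : 0 < m)
    (hmb : (m : ℝ) ≥ 5 * μ⁻¹ * b ^ 2)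
    (X : Finset V) (hX : (X.card : ℝ) ≥ 5 * m ^ 2)
    (hW : (ramsey k m : ℝ) ≤
      (X.filter fun v =>
        μ * X.card ≤ ((Finset.univ.filter fun u => redᶜ.Adj v u) ∩ X).card).card) :
    (∃ s : Finset V, s ⊆ X ∧ red.IsNClique k s) ∨
    (∃ S T : Finset V, S ⊆ X ∧ T ⊆ X ∧ Disjoint S T ∧
      b ≤ S.card ∧ μ ^ b / 2 * X.card ≤ (T.card : ℝ) ∧
      redᶜ.IsClique ↑S ∧ ∀ s ∈ S, ∀ t ∈ T, redᶜ.Adj s t) := by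
  obtain ⟨N0, hN0⟩ := my_ramsey_exists (k + m) k m le_rfl
  have hne : Set.Nonempty {N | ∀ red' : SimpleGraph (Fin N),
      (∃ s : Finset (Fin N), red'.IsNClique k s) ∨
      (∃ s : Finset (Fin N), red'ᶜ.IsNClique m s)} := ⟨N0, hN0⟩
  have hmem : ∀ red' : SimpleGraph (Fin (ramsey k m)),
      (∃ s : Finset (Fin (ramsey k m)), red'.IsNClique k s) ∨
      (∃ s : Finset (Fin (ramsey k m)), red'ᶜ.IsNClique m s) := Nat.sInf_mem hne
  set W := X.filter (fun v =>
      μ * X.card ≤ (((Finset.univ.filter fun u => redᶜ.Adj v u) ∩ X).card : ℝ)) with hWdef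
  have hRW : ramsey k m ≤ W.card := by exact_mod_cast hW
  obtain ⟨f, hf⟩ := my_emb W hRW
  rcases my_transfer red f hmem with ⟨s, hsub, hs⟩ | ⟨M, hMsub, hM⟩
  · refine Or.inl ⟨s, fun x hx => ?_, hs⟩
    obtain ⟨i, rfl⟩ := hsub x hx
    exact Finset.filter_subset _ _ (hf i)
  right
  have hMW : M ⊆ W := fun x hx => by obtain ⟨i, rfl⟩ := hMsub x hx; exact hf i
  have hMX : M ⊆ X := hMW.trans (Finset.filter_subset _ _)
  have hX0 : (0:ℝ) < X.card := lt_of_lt_of_le (by positivity) hX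
  have hμm : 5 * (b:ℝ)^2 ≤ μ * m := by
    have h1 := mul_le_mul_of_nonneg_left hmb hμ0.le
    have h2 : μ * (5 * μ⁻¹ * (b:ℝ)^2) = 5 * b^2 := by field_simp
    linarith
  have hb1 : (1:ℝ) ≤ b := by exact_mod_cast hb
  have hbm : b ≤ m := by
    have hμmle : μ * m ≤ m := by nlinarith [hm.le]
    have : (b:ℝ) ≤ m := by nlinarith
    exact_mod_cast this
  -- notation
  set e : V → ℕ := fun v => (M.filter fun u => redᶜ.Adj u v).card with he
  set 𝒯 : Finset V → Finset V := fun S => X.filter fun v => ∀ s ∈ S, redᶜ.Adj s v with h𝒯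
  -- degrees into X are large
  have hdeg : ∀ u ∈ M, μ * X.card ≤ ((X.filter fun v => redᶜ.Adj u v).card : ℝ) := by
    intro u hu
    have h1 := (Finset.mem_filter.mp (hMW hu)).2
    have h2 : (Finset.univ.filter fun x => redᶜ.Adj u x) ∩ X
        = X.filter fun v => redᶜ.Adj u v := by
      ext x; simp [Finset.mem_filter, Finset.mem_inter, and_comm]
    rwa [h2] at h1
  -- double counting
  have hsum1 : (m:ℝ) * (μ * X.card) ≤ ∑ v ∈ X, (e v : ℝ) := by
    have hswap : ∑ v ∈ X, (e v) = ∑ u ∈ M, (X.filter fun v => redᶜ.Adj u v).card := by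
      simp only [he, Finset.card_filter]
      exact Finset.sum_comm
    have : (m:ℝ) * (μ * X.card) ≤ ∑ u ∈ M, ((X.filter fun v => redᶜ.Adj u v).card : ℝ) := by
      rw [show (m:ℝ) * (μ * X.card) = ∑ _u ∈ M, (μ * X.card) by
        rw [Finset.sum_const, hM.2, nsmul_eq_mul]]
      exact Finset.sum_le_sum hdeg
    calc (m:ℝ) * (μ * X.card) ≤ _ := this
      _ = ∑ v ∈ X, (e v : ℝ) := by rw [← Nat.cast_sum, ← hswap, Nat.cast_sum]
  -- sum over b-subsets
  have hTsum : ∑ S ∈ Finset.powersetCard b M, (𝒯 S).card = ∑ v ∈ X, (e v).choose b := by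
    simp only [h𝒯, Finset.card_filter]
    rw [Finset.sum_comm]
    refine Finset.sum_congr rfl fun v hv => ?_
    rw [← Finset.card_filter]
    have heq : (Finset.powersetCard b M).filter (fun S => ∀ s ∈ S, redᶜ.Adj s v)
        = Finset.powersetCard b (M.filter fun u => redᶜ.Adj u v) := by
      ext S
      simp only [Finset.mem_filter, Finset.mem_powersetCard, Finset.subset_iff,
        Finset.mem_filter]
      constructor
      · rintro ⟨⟨h1, h2⟩, h3⟩
        refine ⟨?_, h2⟩
        intro x hx
        exact ⟨h1 hx, h3 x hx⟩
      · rintro ⟨h1, h2⟩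
        refine ⟨⟨?_, h2⟩, fun s hs => (h1 hs).2⟩
        intro x hx
        exact (h1 hx).1
    rw [heq, Finset.card_powersetCard]
  -- the greedy/convexity counting argument
  set gR : V → ℝ := fun v => ((e v + 1 - b : ℕ) : ℝ) with hgR
  have hcast : ∀ a c : ℕ, (a:ℝ) - c ≤ ((a - c : ℕ) : ℝ) := by
    intro a c
    rcases le_total c a with h | h
    · rw [Nat.cast_sub h]
    · rw [Nat.sub_eq_zero_of_le h]
      have : (a:ℝ) ≤ c := by exact_mod_cast h
      simpa using by linarith
  have hgsum : (μ * m - b) * X.card ≤ ∑ v ∈ X, gR v := by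
    have h1 : ∀ v ∈ X, (e v : ℝ) + 1 - b ≤ gR v := by
      intro v _
      have := hcast (e v + 1) b
      push_cast at this ⊢
      linarith
    have h2 : ∑ v ∈ X, ((e v : ℝ) + 1 - b) ≤ ∑ v ∈ X, gR v := Finset.sum_le_sum h1
    have h3 : ∑ v ∈ X, ((e v:ℝ) + 1 - b) = (∑ v ∈ X, (e v:ℝ)) + (1 - b) * X.card := by
      rw [Finset.sum_sub_distrib, Finset.sum_add_distrib, Finset.sum_const, Finset.sum_const,
        nsmul_eq_mul, nsmul_eq_mul]
      ring
    rw [h3] at h2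
    have hX0' : (0:ℝ) ≤ X.card := hX0.le
    nlinarith [hsum1]
  have hpm : (∑ v ∈ X, gR v) ^ b / (X.card:ℝ) ^ (b-1) ≤ ∑ v ∈ X, gR v ^ b := by
    have h := pow_sum_div_card_le_sum_pow (s := X) (f := gR) (fun i _ => by positivity) (b-1)
    rwa [Nat.sub_add_cancel hb] at h
  have hμmb : (0:ℝ) ≤ μ * m - b := by nlinarith [hμm, hb1]
  have hstep : ((μ * m - b) * X.card) ^ b / (X.card:ℝ)^(b-1) ≤ ∑ v ∈ X, gR v ^ b := by
    refine le_trans ?_ hpm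
    have hle : ((μ*m - b) * X.card)^b ≤ (∑ v ∈ X, gR v)^b :=
      pow_le_pow_left₀ (by positivity) hgsum _
    exact (div_le_div_iff_of_pos_right (by positivity)).mpr hle
  have hnpow : (X.card:ℝ)^b = (X.card:ℝ)^(b-1) * X.card := by
    conv_lhs => rw [← Nat.sub_add_cancel hb]
    rw [pow_succ]
  have hsimp : ((μ * m - b) * X.card) ^ b / (X.card:ℝ)^(b-1) = (μ*m - b)^b * X.card := by
    rw [mul_pow, hnpow]
    have hne0 : (X.card:ℝ)^(b-1) ≠ 0 := by positivity
    field_simp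
  have hdF : ∑ v ∈ X, gR v ^ b ≤ ∑ v ∈ X, ((e v).descFactorial b : ℝ) := by
    refine Finset.sum_le_sum fun v _ => ?_
    have h := Nat.pow_sub_le_descFactorial (e v) b
    calc gR v ^ b = (((e v + 1 - b : ℕ):ℝ))^b := by simp only [hgR]
      _ ≤ _ := by exact_mod_cast h
  have hchoose : ∑ v ∈ X, ((e v).descFactorial b : ℝ)
      = (b.factorial : ℝ) * ∑ S ∈ Finset.powersetCard b M, ((𝒯 S).card : ℝ) := by
    have hnat : ∑ v ∈ X, (e v).descFactorial b
        = b.factorial * ∑ S ∈ Finset.powersetCard b M, (𝒯 S).card := by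
      rw [hTsum, Finset.mul_sum]
      exact Finset.sum_congr rfl fun v _ => Nat.descFactorial_eq_factorial_mul_choose _ _
    exact_mod_cast hnat
  have hmain : (μ*m - b)^b * X.card
      ≤ (b.factorial : ℝ) * ∑ S ∈ Finset.powersetCard b M, ((𝒯 S).card:ℝ) := by
    rw [← hchoose, ← hsimp]
    exact hstep.trans hdF
  -- find a good S
  have hPne : (Finset.powersetCard b M).Nonempty :=
    Finset.powersetCard_nonempty.mpr (by rw [hM.2]; exact hbm)
  have hexist : ∃ S ∈ Finset.powersetCard b M, μ^b/2 * X.card ≤ ((𝒯 S).card:ℝ) := by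
    by_contra hc
    push_neg at hc
    have hlt : ∑ S ∈ Finset.powersetCard b M, ((𝒯 S).card:ℝ)
        < (m.choose b : ℝ) * (μ^b/2 * X.card) := by
      have h := Finset.sum_lt_sum_of_nonempty hPne hc
      rwa [Finset.sum_const, Finset.card_powersetCard, hM.2, nsmul_eq_mul] at h
    have hfc : b.factorial * m.choose b ≤ m ^ b := by
      rw [← Nat.descFactorial_eq_factorial_mul_choose]
      exact Nat.descFactorial_le_pow _ _
    have hfcR : (b.factorial : ℝ) * (m.choose b : ℝ) ≤ (m:ℝ)^b := by exact_mod_cast hfc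
    have hcpos : (0:ℝ) ≤ μ^b/2 * X.card := by positivity
    have h9 : (μ*m - b)^b * X.card < (m:ℝ)^b * (μ^b/2 * X.card) := by
      calc (μ*m - b)^b * X.card ≤ _ := hmain
        _ < (b.factorial:ℝ) * ((m.choose b : ℝ) * (μ^b/2 * X.card)) := by
            have : (0:ℝ) < b.factorial := by exact_mod_cast b.factorial_pos
            exact mul_lt_mul_of_pos_left hlt this
        _ = ((b.factorial:ℝ) * (m.choose b:ℝ)) * (μ^b/2 * X.card) := by ring
        _ ≤ (m:ℝ)^b * (μ^b/2 * X.card) := mul_le_mul_of_nonneg_right hfcR hcpos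
    -- Bernoulli: (μm - b)^b ≥ (4/5) (μ m)^b
    set x : ℝ := 1/(5*(b:ℝ)) with hx
    have hxpos : 0 < x := by rw [hx]; positivity
    have hx5 : x ≤ 1/5 := by
      rw [hx]
      rw [div_le_div_iff₀ (by positivity) (by norm_num)]
      nlinarith
    have hB : (b:ℝ) ≤ μ * m * x := by
      rw [hx, mul_one_div, le_div_iff₀ (by positivity : (0:ℝ) < 5 * (b:ℝ))]
      nlinarith [hμm]
    have hD : μ * m * (1 - x) ≤ μ * m - b := by nlinarith [hB]
    have hD0 : (0:ℝ) ≤ μ * m * (1 - x) := by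
      have h1 : (0:ℝ) ≤ μ * m := by positivity
      nlinarith [hx5]
    have hDpow : (μ*m*(1-x))^b ≤ (μ*m - b)^b := pow_le_pow_left₀ hD0 hD _
    have hbern0 : 1 - (b:ℝ) * x ≤ (1 - x)^b := by
      have h := one_add_mul_le_pow (a := -x) (by linarith : (-2:ℝ) ≤ -x) b
      have e1 : 1 + (b:ℝ) * (-x) = 1 - b * x := by ring
      have e2 : (1 + -x) = 1 - x := by ring
      rw [e1, e2] at h
      exact h
    have hbx : (b:ℝ) * x = 1/5 := by
      rw [hx]
      field_simp
    have h45 : (4/5:ℝ) ≤ (1-x)^b := by rw [hbx] at hbern0; linarith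
    have hbern : (4/5:ℝ) * (μ*m)^b ≤ (μ*m - b)^b := by
      calc (4/5:ℝ) * (μ*m)^b ≤ (1-x)^b * (μ*m)^b :=
            mul_le_mul_of_nonneg_right h45 (by positivity)
        _ = (μ*m)^b * (1-x)^b := by ring
        _ = (μ*m*(1-x))^b := (mul_pow _ _ _).symm
        _ ≤ _ := hDpow
    have hPn : (0:ℝ) < (μ*m)^b * X.card := by positivity
    have hmp : (μ*m)^b = μ^b * (m:ℝ)^b := mul_pow μ m b
    nlinarith [h9, hbern, hPn, hX0]
  obtain ⟨S, hSP, hScard⟩ := hexist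
  obtain ⟨hSM, hSb⟩ := Finset.mem_powersetCard.mp hSP
  refine ⟨S, 𝒯 S, hSM.trans hMX, Finset.filter_subset _ _, ?_, hSb.ge, hScard,
    hM.1.subset (Finset.coe_subset.mpr hSM), fun s hs t ht => (Finset.mem_filter.mp ht).2 s hs⟩
  rw [Finset.disjoint_left]
  intro a ha hb'
  exact redᶜ.irrefl ((Finset.mem_filter.mp hb').2 a ha)
end
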